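/- Let n ≥ 3 be an integer, m = n − 1, ρ < 1/(2m), and let (x, y) be a solution of the system (S_ρ) on ℝ such that for all t ∈ ℝ: 0 < x(t) < 1, x′(t) < 0, y(t) > 0, y′(t) > 0, and (x(t), y(t)) → (1, 0) as t → −∞. Then x(t)·y(t) → (n−2)(1−(n−1)ρ) and y′(t) → (n−2)(1−2(n−1)ρ) as t → +∞. -/

import Mathlib

/-!
Write `E = 1 - 2mρ` and `w = xy - (m-1)(1-mρ)(1-x²)`, so that `E x' = -w` and
`E y' = (1+m-4mρ) w + (m-1)E²(1-x²)`. Hence `x' < 0` means `w > 0`, and then `y'` is bounded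
below by a positive constant on `[0, ∞)`, so `y → ∞`. The decreasing `x` must tend to `0`: a
positive limit `L` would force `E x' ≤ (m-1)(1-mρ) - L y → -∞`. Finally
`E w' = -(y + O(x)) w + O(x)`, a linear equation whose damping tends to `∞` and whose forcing
tends to `0`, so Grönwall's inequality gives `w → 0`. Both limits are then read off from
`xy = w + (m-1)(1-mρ)(1-x²)` and the formula for `y'`.
-/

/-- `IsEinsteinSystemSol m ρ x y` means the pair of differentiable functions `(x, y)` solves
the planar system `(S_ρ)`:
`(1 − 2mρ)·x′ = (m−1)(1−mρ)(1 − x²) − x·y` and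
`(1 − 2mρ)·y′ = −m(m−1)(1−(m+1)ρ)(1 − x²) + (1 + m − 4mρ)·x·y`,
arising from rotationally symmetric gradient steady ρ-Einstein solitons. -/
def IsEinsteinSystemSol (m ρ : ℝ) (x y : ℝ → ℝ) : Prop :=
  Differentiable ℝ x ∧ Differentiable ℝ y ∧
    (∀ t : ℝ, (1 - 2 * m * ρ) * deriv x t =
      (m - 1) * (1 - m * ρ) * (1 - x t ^ 2) - x t * y t) ∧
    (∀ t : ℝ, (1 - 2 * m * ρ) * deriv y t =
      -(m * (m - 1) * (1 - (m + 1) * ρ) * (1 - x t ^ 2)) + (1 + m - 4 * m * ρ) * x t * y t)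

open Filter Topology Set Real

theorem tendsto_atTop_of_le_deriv {f : ℝ → ℝ} (hf : Differentiable ℝ f) {c T : ℝ} (hc : 0 < c)
    (hf' : ∀ t ≥ T, c ≤ deriv f t) : Tendsto f atTop atTop := by
  have hgrowth : ∀ t ≥ T, f T + c * (t - T) ≤ f t := fun t ht => by
    have := (convex_Ici T).mul_sub_le_image_sub_of_le_deriv hf.continuous.continuousOn
      hf.differentiableOn (fun s hs => hf' s (interior_subset hs)) T self_mem_Ici t ht ht
    linarith
  refine tendsto_atTop_mono' atTop (eventually_atTop.2 ⟨T, hgrowth⟩) ?_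
  exact tendsto_atTop_add_const_left _ _
    ((tendsto_atTop_add_const_right _ _ tendsto_id).const_mul_atTop hc)

theorem tendsto_zero_of_deriv_le_neg_add {w g : ℝ → ℝ} (hw : Differentiable ℝ w)
    (hw0 : ∀ᶠ t in atTop, 0 ≤ w t) (hg : Tendsto g atTop (𝓝 0))
    (hw' : ∀ᶠ t in atTop, deriv w t ≤ -w t + g t) : Tendsto w atTop (𝓝 0) := by
  refine tendsto_order.2 ⟨fun a ha => hw0.mono fun t ht => ha.trans_le ht, fun b hb => ?_⟩
  obtain ⟨T, hT⟩ := eventually_atTop.1 (hw'.and (hg.eventually (gt_mem_nhds (half_pos hb))))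
  have hbound : ∀ t ≥ T, w t ≤ gronwallBound (w T) (-1) (b / 2) (t - T) := fun t ht =>
    le_gronwallBound_of_liminf_deriv_right_le hw.continuous.continuousOn
      (fun s _ _ hr => (hw s).hasDerivAt.hasDerivWithinAt.liminf_right_slope_le hr) le_rfl
      (fun s hs => by linarith [hT s hs.1]) t ⟨ht, le_rfl⟩
  have hlim : Tendsto (fun t => gronwallBound (w T) (-1) (b / 2) (t - T)) atTop (𝓝 (b / 2)) := by
    have hexp : Tendsto (fun t => exp (-1 * (t - T))) atTop (𝓝 0) := by
      refine (tendsto_exp_neg_atTop_nhds_zero.comp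
        (tendsto_atTop_add_const_right _ (-T) tendsto_id)).congr fun t => ?_
      simp only [Function.comp, id]
      ring_nf
    rw [gronwallBound_of_K_ne_0 (by norm_num)]
    convert (hexp.const_mul (w T)).add ((hexp.sub_const 1).const_mul (b / 2 / -1)) using 2
    ring
  filter_upwards [eventually_ge_atTop T, hlim.eventually (gt_mem_nhds (half_lt_self hb))]
    with t ht hlt
  exact (hbound t ht).trans_lt hlt

def einsteinDefect (m ρ : ℝ) (x y : ℝ → ℝ) (t : ℝ) : ℝ :=
  x t * y t - (m - 1) * (1 - m * ρ) * (1 - x t ^ 2)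

theorem tendsto_mul_of_tendsto_einsteinDefect {m ρ : ℝ} {x y : ℝ → ℝ}
    (hx₀ : Tendsto x atTop (𝓝 0)) (hw : Tendsto (einsteinDefect m ρ x y) atTop (𝓝 0)) :
    Tendsto (fun t => x t * y t) atTop (𝓝 ((m - 1) * (1 - m * ρ))) := by
  have := hw.add (((hx₀.pow 2).const_sub 1).const_mul ((m - 1) * (1 - m * ρ)))
  convert this using 2 with t
  · simp only [einsteinDefect]
    ring
  · simp

namespace IsEinsteinSystemSol

variable {m ρ : ℝ} {x y : ℝ → ℝ} (h : IsEinsteinSystemSol m ρ x y)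
include h

theorem mul_deriv_fst (t : ℝ) : (1 - 2 * m * ρ) * deriv x t = -einsteinDefect m ρ x y t := by
  rw [h.2.2.1 t, einsteinDefect]
  ring

theorem mul_deriv_snd (t : ℝ) :
    (1 - 2 * m * ρ) * deriv y t = (1 + m - 4 * m * ρ) * einsteinDefect m ρ x y t +
      (m - 1) * (1 - 2 * m * ρ) ^ 2 * (1 - x t ^ 2) := by
  rw [h.2.2.2 t, einsteinDefect]
  ring

theorem differentiable_einsteinDefect : Differentiable ℝ (einsteinDefect m ρ x y) := by
  have hx := h.1
  have hy := h.2.1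
  unfold einsteinDefect
  fun_prop

theorem mul_deriv_einsteinDefect (t : ℝ) :
    (1 - 2 * m * ρ) * deriv (einsteinDefect m ρ x y) t =
      -(y t + (2 * ((m - 1) * (1 - m * ρ)) - (1 + m - 4 * m * ρ)) * x t) *
          einsteinDefect m ρ x y t +
        (m - 1) * (1 - 2 * m * ρ) ^ 2 * (x t * (1 - x t ^ 2)) := by
  have hderiv : deriv (einsteinDefect m ρ x y) t = deriv x t * y t + x t * deriv y t +
      (m - 1) * (1 - m * ρ) * (2 * x t * deriv x t) := by
    have hx := (h.1 t).hasDerivAt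
    have hy := (h.2.1 t).hasDerivAt
    have hw : HasDerivAt (einsteinDefect m ρ x y) (deriv x t * y t + x t * deriv y t -
        (m - 1) * (1 - m * ρ) * -(2 * x t ^ (2 - 1) * deriv x t)) t :=
      (hx.mul hy).sub (((hx.pow 2).const_sub 1).const_mul _)
    rw [hw.deriv]
    ring
  rw [hderiv, einsteinDefect]
  linear_combination (y t + 2 * ((m - 1) * (1 - m * ρ)) * x t) * h.2.2.1 t + x t * h.2.2.2 t

theorem tendsto_deriv_snd (hE : 1 - 2 * m * ρ ≠ 0) (hx₀ : Tendsto x atTop (𝓝 0))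
    (hw : Tendsto (einsteinDefect m ρ x y) atTop (𝓝 0)) :
    Tendsto (deriv y) atTop (𝓝 ((m - 1) * (1 - 2 * m * ρ))) := by
  have := ((hw.const_mul (1 + m - 4 * m * ρ)).add
    (((hx₀.pow 2).const_sub 1).const_mul ((m - 1) * (1 - 2 * m * ρ) ^ 2))).div_const
      (1 - 2 * m * ρ)
  convert this using 2 with t
  · rw [eq_div_iff hE, mul_comm, h.mul_deriv_snd t]
  · rw [eq_div_iff hE]
    ring

variable (hm : 1 < m) (hρ : 2 * m * ρ < 1) (hx : ∀ t, 0 < x t ∧ x t < 1)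
  (hx' : ∀ t, deriv x t < 0)
include hρ hx'

theorem einsteinDefect_pos (t : ℝ) : 0 < einsteinDefect m ρ x y t := by
  have := mul_neg_of_pos_of_neg (sub_pos.2 hρ) (hx' t)
  linarith [h.mul_deriv_fst t]

include hm hx

theorem tendsto_snd_atTop : Tendsto y atTop atTop := by
  have hE : 0 < 1 - 2 * m * ρ := sub_pos.2 hρ
  refine tendsto_atTop_of_le_deriv h.2.1 (T := 0)
    (c := (m - 1) * (1 - 2 * m * ρ) * (1 - x 0 ^ 2))
    (mul_pos (mul_pos (sub_pos.2 hm) hE) (by nlinarith [hx 0])) fun t ht => ?_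
  have hxt : x t ≤ x 0 := (strictAnti_of_deriv_neg hx').antitone ht
  refine le_of_mul_le_mul_left ?_ hE
  rw [h.mul_deriv_snd t]
  nlinarith [mul_pos (by linarith : (0 : ℝ) < 1 + m - 4 * m * ρ) (h.einsteinDefect_pos hρ hx' t),
    mul_nonneg (mul_nonneg (sub_pos.2 hm).le (sq_nonneg (1 - 2 * m * ρ)))
      (by nlinarith [hx t] : (0 : ℝ) ≤ x 0 ^ 2 - x t ^ 2)]

theorem tendsto_fst_zero (hy : Tendsto y atTop atTop) : Tendsto x atTop (𝓝 0) := by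
  have hbdd : BddBelow (range x) := ⟨0, by rintro _ ⟨t, rfl⟩; exact (hx t).1.le⟩
  have hlim := tendsto_atTop_ciInf (strictAnti_of_deriv_neg hx').antitone hbdd
  set L := ⨅ t, x t
  suffices L = 0 from this ▸ hlim
  by_contra hL
  have hLpos : 0 < L := (le_ciInf fun t => (hx t).1.le).lt_of_ne' hL
  have hE : 0 < 1 - 2 * m * ρ := sub_pos.2 hρ
  have hA : 0 < (m - 1) * (1 - m * ρ) := mul_pos (sub_pos.2 hm) (by nlinarith)
  obtain ⟨T, hT⟩ := eventually_atTop.1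
    (hy.eventually_ge_atTop (((m - 1) * (1 - m * ρ) + (1 - 2 * m * ρ)) / L))
  have hescape : Tendsto (-x) atTop atTop := by
    refine tendsto_atTop_of_le_deriv h.1.neg (T := T) one_pos fun t ht => ?_
    have hyt := (div_le_iff₀ hLpos).1 (hT t ht)
    have hLx : L * y t ≤ x t * y t := mul_le_mul_of_nonneg_right (ciInf_le hbdd t)
      ((div_pos (add_pos hA hE) hLpos).le.trans (hT t ht))
    have hw := h.mul_deriv_fst t
    rw [einsteinDefect] at hw
    rw [deriv.neg]
    nlinarith [sq_nonneg (x t)]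
  obtain ⟨t, ht⟩ := (hescape.eventually_gt_atTop 0).exists
  linarith [(hx t).1, show (-x) t = -x t from rfl]

omit hm hx in
theorem tendsto_einsteinDefect_zero (hx₀ : Tendsto x atTop (𝓝 0)) (hy : Tendsto y atTop atTop) :
    Tendsto (einsteinDefect m ρ x y) atTop (𝓝 0) := by
  have hE : 0 < 1 - 2 * m * ρ := sub_pos.2 hρ
  have hg : Tendsto (fun t => (m - 1) * (1 - 2 * m * ρ) * (x t * (1 - x t ^ 2))) atTop (𝓝 0) := by
    simpa using ((hx₀.mul ((hx₀.pow 2).const_sub 1)).const_mul ((m - 1) * (1 - 2 * m * ρ)))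
  have hrate : Tendsto (fun t => y t + (2 * ((m - 1) * (1 - m * ρ)) - (1 + m - 4 * m * ρ)) * x t)
      atTop atTop := hy.atTop_add (hx₀.const_mul _)
  refine tendsto_zero_of_deriv_le_neg_add h.differentiable_einsteinDefect
    (Eventually.of_forall fun t => (h.einsteinDefect_pos hρ hx' t).le) hg ?_
  filter_upwards [hrate.eventually_ge_atTop (1 - 2 * m * ρ)] with t ht
  refine le_of_mul_le_mul_left ?_ hE
  rw [h.mul_deriv_einsteinDefect t]
  nlinarith [mul_le_mul_of_nonneg_right ht (h.einsteinDefect_pos hρ hx' t).le]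

end IsEinsteinSystemSol

theorem soliton_trajectory_product_limits_general (n : ℕ) (hn : 3 ≤ n) (m ρ : ℝ)
    (hm : m = (n : ℝ) - 1) (hρ : ρ < 1 / (2 * m)) (x y : ℝ → ℝ)
    (hsol : IsEinsteinSystemSol m ρ x y)
    (hx : ∀ t : ℝ, 0 < x t ∧ x t < 1) (hx' : ∀ t : ℝ, deriv x t < 0) :
    Filter.Tendsto (fun t => x t * y t) Filter.atTop
        (nhds (((n : ℝ) - 2) * (1 - ((n : ℝ) - 1) * ρ))) ∧
      Filter.Tendsto (fun t => deriv y t) Filter.atTop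
        (nhds (((n : ℝ) - 2) * (1 - 2 * ((n : ℝ) - 1) * ρ))) := by
  have hm₁ : 1 < m := by
    have : (3 : ℝ) ≤ n := by exact_mod_cast hn
    linarith
  have hρ' : 2 * m * ρ < 1 := by
    rwa [lt_div_iff₀ (by positivity), mul_comm] at hρ
  have hy_top := hsol.tendsto_snd_atTop hm₁ hρ' hx hx'
  have hx_zero := hsol.tendsto_fst_zero hm₁ hρ' hx hx' hy_top
  have hw := hsol.tendsto_einsteinDefect_zero hρ' hx' hx_zero hy_top
  subst hm
  constructor
  · convert tendsto_mul_of_tendsto_einsteinDefect hx_zero hw using 2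
    ring
  · convert hsol.tendsto_deriv_snd (sub_pos.2 hρ').ne' hx_zero hw using 2
    ring

/-- Intermediate step of Proposition 4.4: along the soliton trajectory (`ρ < 1/(2m)`),
`x·y → (n−2)(1−(n−1)ρ)` and `y′ → (n−2)(1−2(n−1)ρ)` as `t → +∞`. -/
theorem soliton_trajectory_product_limits (n : ℕ) (hn : 3 ≤ n) (m ρ : ℝ)
    (hm : m = (n : ℝ) - 1) (hρ : ρ < 1 / (2 * m)) (x y : ℝ → ℝ)
    (hsol : IsEinsteinSystemSol m ρ x y)
    (hx : ∀ t : ℝ, 0 < x t ∧ x t < 1) (hx' : ∀ t : ℝ, deriv x t < 0)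
    (hy : ∀ t : ℝ, 0 < y t) (hy' : ∀ t : ℝ, 0 < deriv y t)
    (hlim : Filter.Tendsto (fun t => (x t, y t)) Filter.atBot (nhds (1, 0))) :
    Filter.Tendsto (fun t => x t * y t) Filter.atTop
        (nhds (((n : ℝ) - 2) * (1 - ((n : ℝ) - 1) * ρ))) ∧
      Filter.Tendsto (fun t => deriv y t) Filter.atTop
        (nhds (((n : ℝ) - 2) * (1 - 2 * ((n : ℝ) - 1) * ρ))) :=
  soliton_trajectory_product_limits_general n hn m ρ hm hρ x y hsol hx hx'
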